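/- arXiv:2604.17588 — 6 statements merged into one kernel-verified Lean document; each statement's English description precedes it below -/
import Mathlib

section
/- Let F = {f₁,…,fₘ} be an IFS of continuous self-maps of a metric space X. Then the recurrent set R_F is forward-invariant: if x ∈ R_F then fᵢ(x) ∈ R_F for every i. -/
open Filter Metric Topology

/-- Composition of the IFS maps along a word. -/
def ifsComp {X : Type*} {m : ℕ} (f : Fin m → X → X) : List (Fin m) → X → X
  | [], x => x
  | i :: I, x => f i (ifsComp f I x)

/-- The limit set of a set under the IFS. -/
def limitSet {X : Type*} [MetricSpace X] {m : ℕ} (f : Fin m → X → X) (A : Set X) : Set X :=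
  {y | ∃ (I : ℕ → List (Fin m)) (a : ℕ → X), (∀ n, a n ∈ A) ∧
    Tendsto (fun n => (I n).length) atTop atTop ∧
    Tendsto (fun n => ifsComp f (I n) (a n)) atTop (nhds y)}

/-- The orbit of a point under the IFS. -/
def ifsOrbit {X : Type*} {m : ℕ} (f : Fin m → X → X) (x : X) : Set X :=
  {y | ∃ I : List (Fin m), ifsComp f I x = y}

/-- A point is recurrent if it belongs to the limit set of every point of its orbit. -/
def isRecurrent {X : Type*} [MetricSpace X] {m : ℕ} (f : Fin m → X → X) (x : X) : Prop :=
  ∀ z ∈ ifsOrbit f x, x ∈ limitSet f {z}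

/-! The orbit of `fᵢ x` lies in the orbit of `x`, and limit sets are invariant under each
continuous `fᵢ`: if `Φ^{Iₙ}(z) → x` then `Φ^{i :: Iₙ}(z) = fᵢ (Φ^{Iₙ}(z)) → fᵢ x`. -/

section

variable {X : Type*} {m : ℕ} (f : Fin m → X → X)

lemma ifsComp_append (I J : List (Fin m)) (x : X) :
    ifsComp f (I ++ J) x = ifsComp f I (ifsComp f J x) := by
  induction I with
  | nil => rfl
  | cons i I ih => simp only [List.cons_append, ifsComp, ih]

lemma ifsOrbit_apply_subset (i : Fin m) (x : X) : ifsOrbit f (f i x) ⊆ ifsOrbit f x := by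
  rintro z ⟨I, rfl⟩
  exact ⟨I ++ [i], ifsComp_append f I [i] x⟩

lemma apply_mem_limitSet [MetricSpace X] {i : Fin m} (hfi : Continuous (f i)) {A : Set X} {y : X}
    (hy : y ∈ limitSet f A) : f i y ∈ limitSet f A := by
  obtain ⟨I, a, ha, hlen, hconv⟩ := hy
  refine ⟨fun n => i :: I n, a, ha, ?_, (hfi.tendsto y).comp hconv⟩
  exact tendsto_atTop_mono (fun n => (I n).length.le_succ) hlen

end

theorem stmt_2 {X : Type*} [MetricSpace X] {m : ℕ} (f : Fin m → X → X)
    (hf : ∀ i, Continuous (f i)) (x : X) (hx : isRecurrent f x) :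
    ∀ i : Fin m, isRecurrent f (f i x) :=
  fun i z hz => apply_mem_limitSet f (hf i) (hx z (ifsOrbit_apply_subset f i x hz))
end

section
/- Let F = {f₁,…,fₘ} be an IFS where each fᵢ is a contraction with common ratio λ < 1 on a complete metric space X, and let K be the Hutchinson attractor, i.e. the unique non-empty compact set with K = ⋃ᵢ fᵢ(K). Then every point of K is recurrent: K ⊆ R_F. -/
open Filter Metric Topology

/-! Fix `x ∈ K`. Since `K ⊆ ⋃ i, fᵢ '' K`, one can pull `x` back `n` times inside `K`: there are
a word `Wₙ` of length `n` and `yₙ ∈ K` with `Φ^{Wₙ}(yₙ) = x`. For any `z`, the contraction gives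
`dist (Φ^{Wₙ} z) x ≤ λⁿ · dist z yₙ ≤ λⁿ · r`, where `K ⊆ closedBall z r`, so `Φ^{Wₙ} z → x`. -/

section IFS

variable {X : Type*} {m : ℕ} (f : Fin m → X → X)

lemma ifsComp_append_singleton (I : List (Fin m)) (j : Fin m) (x : X) :
    ifsComp f (I ++ [j]) x = ifsComp f I (f j x) := by
  induction I with
  | nil => rfl
  | cons i I ih => simp [ifsComp, ih]

lemma exists_ifsComp_eq_of_subset_iUnion_image {K : Set X} (hK : K ⊆ ⋃ i, f i '' K)
    {x : X} (hx : x ∈ K) (n : ℕ) :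
    ∃ W : List (Fin m), W.length = n ∧ ∃ y ∈ K, ifsComp f W y = x := by
  induction n with
  | zero => exact ⟨[], rfl, x, hx, rfl⟩
  | succ n ih =>
    obtain ⟨W, hWlen, y, hyK, hWy⟩ := ih
    obtain ⟨i, y', hy'K, rfl⟩ := Set.mem_iUnion.mp (hK hyK)
    refine ⟨W ++ [i], by simp [hWlen], y', hy'K, ?_⟩
    rwa [ifsComp_append_singleton]

lemma dist_ifsComp_le [MetricSpace X] {lam : ℝ} (hlam0 : 0 ≤ lam)
    (hlip : ∀ i u v, dist (f i u) (f i v) ≤ lam * dist u v) (I : List (Fin m)) (u v : X) :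
    dist (ifsComp f I u) (ifsComp f I v) ≤ lam ^ I.length * dist u v := by
  induction I with
  | nil => simp [ifsComp]
  | cons i I ih =>
    calc dist (f i (ifsComp f I u)) (f i (ifsComp f I v))
        ≤ lam * dist (ifsComp f I u) (ifsComp f I v) := hlip _ _ _
      _ ≤ lam * (lam ^ I.length * dist u v) := mul_le_mul_of_nonneg_left ih hlam0
      _ = lam ^ (i :: I).length * dist u v := by rw [List.length_cons, pow_succ]; ring

lemma mem_limitSet_singleton_of_subset_iUnion_image [MetricSpace X] {lam : ℝ}
    (hlam0 : 0 ≤ lam) (hlam1 : lam < 1)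
    (hlip : ∀ i u v, dist (f i u) (f i v) ≤ lam * dist u v)
    {K : Set X} (hKb : Bornology.IsBounded K) (hK : K ⊆ ⋃ i, f i '' K)
    {x : X} (hx : x ∈ K) (z : X) : x ∈ limitSet f {z} := by
  choose W hWlen y hyK hWy using exists_ifsComp_eq_of_subset_iUnion_image f hK hx
  obtain ⟨r, hr⟩ := hKb.subset_closedBall z
  have hdist : ∀ n, dist (ifsComp f (W n) z) x ≤ lam ^ n * r := fun n =>
    calc dist (ifsComp f (W n) z) x
        = dist (ifsComp f (W n) z) (ifsComp f (W n) (y n)) := by rw [hWy n]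
      _ ≤ lam ^ n * dist z (y n) := by
          simpa only [hWlen] using dist_ifsComp_le f hlam0 hlip (W n) z (y n)
      _ ≤ lam ^ n * r := by
          gcongr
          exact dist_comm (y n) z ▸ mem_closedBall.mp (hr (hyK n))
  have hgeom : Tendsto (fun n => lam ^ n * r) atTop (𝓝 0) := by
    simpa using (tendsto_pow_atTop_nhds_zero_of_lt_one hlam0 hlam1).mul_const r
  refine ⟨W, fun _ => z, fun _ => rfl, ?_, ?_⟩
  · simp only [hWlen]
    exact tendsto_id
  · exact tendsto_iff_dist_tendsto_zero.mpr
      (squeeze_zero (fun _ => dist_nonneg) hdist hgeom)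

end IFS

theorem stmt_6_general {X : Type*} [MetricSpace X] {m : ℕ}
    (f : Fin m → X → X) (lam : ℝ) (hlam0 : 0 ≤ lam) (hlam1 : lam < 1)
    (hlip : ∀ i u v, dist (f i u) (f i v) ≤ lam * dist u v)
    (K : Set X) (hKc : IsCompact K)
    (hK : K = ⋃ i : Fin m, f i '' K) :
    ∀ x ∈ K, isRecurrent f x := fun _ hx z _ =>
  mem_limitSet_singleton_of_subset_iUnion_image f hlam0 hlam1 hlip hKc.isBounded
    hK.subset hx z

theorem stmt_6 {X : Type*} [MetricSpace X] [CompleteSpace X] {m : ℕ} (hm : 0 < m)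
    (f : Fin m → X → X) (lam : ℝ) (hlam0 : 0 ≤ lam) (hlam1 : lam < 1)
    (hlip : ∀ i u v, dist (f i u) (f i v) ≤ lam * dist u v)
    (K : Set X) (hKne : K.Nonempty) (hKc : IsCompact K)
    (hK : K = ⋃ i : Fin m, f i '' K) :
    ∀ x ∈ K, isRecurrent f x :=
  stmt_6_general f lam hlam0 hlam1 hlip K hKc hK
end

section
/- Let F be an IFS on a metric space X possessing a compact global trapping region Q (a compact set, forward-invariant under every fᵢ, such that every compact set C ⊆ X is absorbed: there is τ with Φᴵ(C) ⊆ Q for all |I| ≥ τ). Then Ω(Q) is a non-empty compact set which is H-invariant, i.e. Ω(Q) = ⋃_{i=1}^m fᵢ(Ω(Q)). -/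
/-!
Write `Eₙ` for the union of the images of `Q` under all words of length `n`. Forward invariance
of `Q` makes `(Eₙ)` a decreasing sequence of non-empty compact sets with `Eₙ₊₁ = ⋃ᵢ fᵢ(Eₙ)`, and
the limit set is `⋂ₙ Eₙ`, hence non-empty and compact. Continuous images commute with decreasing
intersections of compact sets, and a decreasing intersection commutes with the finite union over
`i`, so `⋃ᵢ fᵢ(⋂ₙ Eₙ) = ⋂ₙ ⋃ᵢ fᵢ(Eₙ) = ⋂ₙ Eₙ₊₁ = ⋂ₙ Eₙ`.
-/

open Filter Metric Topology

open Set

theorem Continuous.image_iInter_of_antitone {X Y : Type*} [TopologicalSpace X] [T2Space X]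
    [TopologicalSpace Y] [T1Space Y] {g : X → Y} (hg : Continuous g) {K : ℕ → Set X}
    (hK : Antitone K) (hKc : ∀ n, IsCompact (K n)) :
    g '' ⋂ n, K n = ⋂ n, g '' K n := by
  refine (image_iInter_subset K g).antisymm fun y hy => ?_
  have hfiber : ∀ n, (K n ∩ g ⁻¹' {y}).Nonempty := fun n => by
    obtain ⟨x, hx, rfl⟩ := mem_iInter.1 hy n
    exact ⟨x, hx, rfl⟩
  have hclosed : ∀ n, IsClosed (K n ∩ g ⁻¹' {y}) :=
    fun n => (hKc n).isClosed.inter (isClosed_singleton.preimage hg)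
  obtain ⟨x, hx⟩ := IsCompact.nonempty_iInter_of_sequence_nonempty_isCompact_isClosed _
    (fun n => inter_subset_inter_left _ (hK n.le_succ)) hfiber
    ((hKc 0).inter_right (isClosed_singleton.preimage hg)) hclosed
  rw [← iInter_inter, mem_inter_iff] at hx
  exact ⟨x, hx.1, hx.2⟩

section Words

variable {X : Type*} {m : ℕ} (f : Fin m → X → X)

def wordImage (A : Set X) (n : ℕ) : Set X :=
  ⋃ (I : List (Fin m)) (_ : I.length = n), ifsComp f I '' A

variable {f}

theorem mem_wordImage {A : Set X} {n : ℕ} {x : X} :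
    x ∈ wordImage f A n ↔ ∃ I : List (Fin m), I.length = n ∧ ∃ a ∈ A, ifsComp f I a = x := by
  simp only [wordImage, mem_iUnion, mem_image, exists_prop]

theorem ifsComp_mem_wordImage {A : Set X} {a : X} (ha : a ∈ A) (I : List (Fin m)) :
    ifsComp f I a ∈ wordImage f A I.length :=
  mem_wordImage.2 ⟨I, rfl, a, ha, rfl⟩

variable (f)

theorem wordImage_zero (A : Set X) : wordImage f A 0 = A := by
  ext x
  simp only [mem_wordImage, List.length_eq_zero_iff, exists_eq_left, ifsComp, exists_eq_right]

theorem wordImage_succ (A : Set X) (n : ℕ) :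
    wordImage f A (n + 1) = ⋃ i, f i '' wordImage f A n := by
  ext x
  simp only [mem_iUnion, mem_image, mem_wordImage]
  constructor
  · rintro ⟨_ | ⟨i, I⟩, hI, a, ha, rfl⟩
    · simp at hI
    · exact ⟨i, _, ⟨I, by simpa using hI, a, ha, rfl⟩, rfl⟩
  · rintro ⟨i, _, ⟨I, rfl, a, ha, rfl⟩, rfl⟩
    exact ⟨i :: I, rfl, a, ha, rfl⟩

variable {f}

theorem antitone_wordImage {A : Set X} (hA : ∀ i, f i '' A ⊆ A) : Antitone (wordImage f A) := by
  refine antitone_nat_of_succ_le fun n => ?_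
  induction n with
  | zero => simpa only [wordImage_succ, wordImage_zero] using iUnion_subset hA
  | succ n ih =>
    rw [wordImage_succ f A (n + 1)]
    exact (iUnion_mono fun i => image_mono ih).trans (wordImage_succ f A n).ge

theorem wordImage_nonempty (hm : 0 < m) {A : Set X} (hA : A.Nonempty) (n : ℕ) :
    (wordImage f A n).Nonempty := by
  induction n with
  | zero => rwa [wordImage_zero]
  | succ n ih =>
    rw [wordImage_succ]
    exact (ih.image _).mono (subset_iUnion_of_subset ⟨0, hm⟩ subset_rfl)

theorem isCompact_wordImage [TopologicalSpace X] (hf : ∀ i, Continuous (f i)) {A : Set X}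
    (hA : IsCompact A) (n : ℕ) : IsCompact (wordImage f A n) := by
  induction n with
  | zero => rwa [wordImage_zero]
  | succ n ih =>
    rw [wordImage_succ]
    exact isCompact_iUnion fun i => ih.image (hf i)

end Words

section LimitSet

variable {X : Type*} [MetricSpace X] {m : ℕ} {f : Fin m → X → X}

theorem limitSet_eq_iInter_wordImage (hf : ∀ i, Continuous (f i)) {A : Set X} (hA : IsCompact A)
    (hAinv : ∀ i, f i '' A ⊆ A) : limitSet f A = ⋂ n, wordImage f A n := by
  refine Subset.antisymm ?_ fun y hy => ?_
  · rintro y ⟨I, a, ha, hlen, hlim⟩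
    refine mem_iInter.2 fun n => (isCompact_wordImage hf hA n).isClosed.mem_of_tendsto hlim ?_
    filter_upwards [hlen.eventually_ge_atTop n] with k hk
    exact antitone_wordImage hAinv hk (ifsComp_mem_wordImage (ha k) (I k))
  · choose I hI a ha hIa using fun n => mem_wordImage.1 (mem_iInter.1 hy n)
    refine ⟨I, a, ha, ?_, ?_⟩
    · exact (tendsto_congr hI).2 tendsto_id
    · simpa only [hIa] using tendsto_const_nhds

theorem iInter_wordImage_eq_iUnion_image (hf : ∀ i, Continuous (f i)) {A : Set X}
    (hA : IsCompact A) (hAinv : ∀ i, f i '' A ⊆ A) :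
    ⋂ n, wordImage f A n = ⋃ i, f i '' ⋂ n, wordImage f A n := by
  have hanti := antitone_wordImage hAinv
  calc ⋂ n, wordImage f A n
      = ⋂ n, wordImage f A (n + 1) := (hanti.iInter_nat_add 1).symm
    _ = ⋂ n, ⋃ i, f i '' wordImage f A n := by simp only [wordImage_succ]
    _ = ⋃ i, ⋂ n, f i '' wordImage f A n :=
        iInter_iUnion_of_antitone fun i _ _ hnk => image_mono (hanti hnk)
    _ = ⋃ i, f i '' ⋂ n, wordImage f A n := by
        simp only [(hf _).image_iInter_of_antitone hanti (isCompact_wordImage hf hA)]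

end LimitSet

theorem stmt_9_general {X : Type*} [MetricSpace X] {m : ℕ} (hm : 0 < m) (f : Fin m → X → X)
    (hf : ∀ i, Continuous (f i)) (Q : Set X) (hQne : Q.Nonempty) (hQc : IsCompact Q)
    (hQinv : ∀ i : Fin m, f i '' Q ⊆ Q) :
    (limitSet f Q).Nonempty ∧ IsCompact (limitSet f Q) ∧
      limitSet f Q = ⋃ i : Fin m, f i '' limitSet f Q := by
  have hcompact := isCompact_wordImage hf hQc
  rw [limitSet_eq_iInter_wordImage hf hQc hQinv]
  refine ⟨?_, ?_, iInter_wordImage_eq_iUnion_image hf hQc hQinv⟩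
  · exact IsCompact.nonempty_iInter_of_sequence_nonempty_isCompact_isClosed _
      (fun n => antitone_wordImage hQinv n.le_succ) (wordImage_nonempty hm hQne) (hcompact 0)
      (fun n => (hcompact n).isClosed)
  · exact (hcompact 0).of_isClosed_subset (isClosed_iInter fun n => (hcompact n).isClosed)
      (iInter_subset _ 0)

theorem stmt_9 {X : Type*} [MetricSpace X] {m : ℕ} (hm : 0 < m) (f : Fin m → X → X)
    (hf : ∀ i, Continuous (f i)) (Q : Set X) (hQne : Q.Nonempty) (hQc : IsCompact Q)
    (hQinv : ∀ i : Fin m, f i '' Q ⊆ Q)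
    (hQabs : ∀ C : Set X, IsCompact C → ∃ τ : ℕ, ∀ I : List (Fin m), τ ≤ I.length →
      ∀ c ∈ C, ifsComp f I c ∈ Q) :
    (limitSet f Q).Nonempty ∧ IsCompact (limitSet f Q) ∧
      limitSet f Q = ⋃ i : Fin m, f i '' limitSet f Q :=
  stmt_9_general hm f hf Q hQne hQc hQinv
end

section
/- Let F be an IFS on a metric space X and suppose x chain-reaches y (for every ε > 0 there is an ε-chain from x to y) but y is not in the orbit of x. Then for every integer p ≥ 0 there exists δ_p > 0 such that every δ_p-chain from x to y has length strictly greater than p. -/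
open Filter Metric Topology

/-- An ε-chain of length exactly k from a to b. -/
def ChainLen {X : Type*} [MetricSpace X] {m : ℕ} (f : Fin m → X → X) (ε : ℝ)
    (a b : X) (k : ℕ) : Prop :=
  ∃ xs : ℕ → X, xs 0 = a ∧ xs k = b ∧
    ∀ n < k, ∃ i : Fin m, dist (f i (xs n)) (xs (n + 1)) < ε

lemma key_shadow {X : Type*} [MetricSpace X] {m : ℕ} (f : Fin m → X → X)
    (hf : ∀ i, Continuous (f i)) (x : X) [Nonempty (Fin m)] :
    ∀ (k : ℕ) (ε : ℝ), 0 < ε → ∃ δ > (0 : ℝ), ∀ z, ChainLen f δ x z k →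
      ∃ g : Fin k → Fin m, dist z (ifsComp f (List.ofFn g) x) < ε := by
  intro k
  induction k with
  | zero =>
    intro ε hε
    refine ⟨ε, hε, fun z hz => ⟨Fin.elim0, ?_⟩⟩
    obtain ⟨xs, h0, hk, _⟩ := hz
    have : z = x := by rw [← h0, ← hk]
    simp [ifsComp, this, hε]
  | succ k ih =>
    intro ε hε
    have hcont : ∀ (g : Fin k → Fin m) (i : Fin m), ∃ η > 0, ∀ w,
        dist w (ifsComp f (List.ofFn g) x) < η →
        dist (f i w) (f i (ifsComp f (List.ofFn g) x)) < ε / 2 := by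
      intro g i
      exact Metric.continuous_iff.mp (hf i) _ (ε / 2) (by positivity)
    choose η hηpos hη using hcont
    have hne : (Finset.univ : Finset ((Fin k → Fin m) × Fin m)).Nonempty := Finset.univ_nonempty
    set η0 : ℝ := Finset.univ.inf' hne (fun p : (Fin k → Fin m) × Fin m => η p.1 p.2) with hη0
    have hη0pos : 0 < η0 := by
      rw [hη0, Finset.lt_inf'_iff]
      exact fun p _ => hηpos p.1 p.2
    obtain ⟨δ₁, hδ₁pos, hδ₁⟩ := ih η0 hη0pos
    refine ⟨min δ₁ (ε / 2), lt_min hδ₁pos (by positivity), fun z hz => ?_⟩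
    obtain ⟨xs, h0, hk, hs⟩ := hz
    obtain ⟨i, hi⟩ := hs k (Nat.lt_succ_self k)
    have hchain_k : ChainLen f δ₁ x (xs k) k := by
      refine ⟨xs, h0, rfl, fun n hn => ?_⟩
      obtain ⟨j, hj⟩ := hs n (Nat.lt_succ_of_lt hn)
      exact ⟨j, lt_of_lt_of_le hj (min_le_left _ _)⟩
    obtain ⟨g, hg⟩ := hδ₁ (xs k) hchain_k
    refine ⟨Fin.cons i g, ?_⟩
    have hlist : List.ofFn (Fin.cons i g : Fin (k+1) → Fin m) = i :: List.ofFn g := by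
      simp [List.ofFn_succ, Fin.cons_succ]
    rw [hlist]
    have hη0le : η0 ≤ η g i :=
      Finset.inf'_le _ (Finset.mem_univ ((g, i) : (Fin k → Fin m) × Fin m))
    have h1 : dist (f i (xs k)) (f i (ifsComp f (List.ofFn g) x)) < ε / 2 :=
      hη (g) i (xs k) (lt_of_lt_of_le hg hη0le)
    have h2 : dist z (f i (xs k)) < ε / 2 := by
      rw [← hk, dist_comm]
      exact lt_of_lt_of_le hi (min_le_right _ _)
    calc dist z (ifsComp f (i :: List.ofFn g) x)
        ≤ dist z (f i (xs k)) + dist (f i (xs k)) (ifsComp f (i :: List.ofFn g) x) :=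
          dist_triangle _ _ _
      _ < ε / 2 + ε / 2 := by
          apply add_lt_add h2
          exact h1
      _ = ε := by ring

lemma no_chain {X : Type*} [MetricSpace X] {m : ℕ} (f : Fin m → X → X)
    (hf : ∀ i, Continuous (f i)) (x y : X)
    (hy : ∀ I : List (Fin m), ifsComp f I x ≠ y) :
    ∀ k : ℕ, ∃ δ > (0 : ℝ), ¬ ChainLen f δ x y k := by
  intro k
  rcases Nat.eq_zero_or_pos m with hm | hm
  · subst hm
    refine ⟨1, one_pos, fun hc => ?_⟩
    obtain ⟨xs, h0, hk, hs⟩ := hc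
    rcases Nat.eq_zero_or_pos k with hk0 | hk0
    · subst hk0
      exact hy [] (by simpa [ifsComp, ← h0] using hk)
    · obtain ⟨i, _⟩ := hs 0 hk0
      exact i.elim0
  · haveI : Nonempty (Fin m) := ⟨⟨0, hm⟩⟩
    have hne : (Finset.univ : Finset (Fin k → Fin m)).Nonempty := Finset.univ_nonempty
    set ε : ℝ := Finset.univ.inf' hne (fun g : Fin k → Fin m => dist y (ifsComp f (List.ofFn g) x))
      with hε
    have hεpos : 0 < ε := by
      rw [hε, Finset.lt_inf'_iff]
      intro g _
      rw [dist_pos]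
      exact fun h => hy (List.ofFn g) h.symm
    obtain ⟨δ, hδpos, hδ⟩ := key_shadow f hf x k ε hεpos
    refine ⟨δ, hδpos, fun hc => ?_⟩
    obtain ⟨g, hg⟩ := hδ y hc
    exact absurd hg (not_lt.mpr (Finset.inf'_le _ (Finset.mem_univ g)))

theorem stmt_12 {X : Type*} [MetricSpace X] {m : ℕ} (f : Fin m → X → X)
    (hf : ∀ i, Continuous (f i)) (x y : X)
    (hchain : ∀ ε > (0 : ℝ), ∃ k : ℕ, ChainLen f ε x y k)
    (hy : ∀ I : List (Fin m), ifsComp f I x ≠ y) :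
    ∀ p : ℕ, ∃ δ > (0 : ℝ), ∀ k : ℕ, ChainLen f δ x y k → p < k := by
  intro p
  choose δf hδfpos hδf using no_chain f hf x y hy
  have hne : (Finset.range (p + 1)).Nonempty := ⟨0, Finset.mem_range.mpr (Nat.succ_pos p)⟩
  refine ⟨(Finset.range (p + 1)).inf' hne δf, ?_, fun k hk => ?_⟩
  · rw [gt_iff_lt, Finset.lt_inf'_iff]
    exact fun j _ => hδfpos j
  · by_contra h
    push_neg at h
    have hkmem : k ∈ Finset.range (p + 1) := Finset.mem_range.mpr (Nat.lt_succ_of_le h)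
    apply hδf k
    obtain ⟨xs, h0, hkk, hs⟩ := hk
    exact ⟨xs, h0, hkk, fun n hn => (hs n hn).imp fun i hi =>
      lt_of_lt_of_le hi (Finset.inf'_le _ hkmem)⟩
end

section
/- Let F = {f₁,…,fₘ} be an IFS on a compact metric space X where each fᵢ is strictly distance-decreasing: d(fᵢ(x),fᵢ(y)) < d(x,y) for all x ≠ y. Then the Hutchinson map H(A) = ⋃ᵢ fᵢ(A) is strictly distance-decreasing on the space K(X) of non-empty compact subsets with the Hausdorff metric: d_H(H(A),H(B)) < d_H(A,B) for all A ≠ B. -/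
/-!
Let `r = d_H(A, B) > 0`. Every `a ∈ A` has a nearest point `b ∈ B` with `d(a, b) ≤ r`, so
`fᵢ a` lies within `d(fᵢ a, fᵢ b) < r` of `H(B)` (trivially when `a = b`); symmetrically for
`B`. The inequalities are strict pointwise, and become strict uniformly because the distance
to `H(B)` attains its maximum on the compact set `H(A)`.
-/

open Metric

section

variable {X : Type*} [MetricSpace X]

lemma lipschitzWith_one_of_dist_lt {f : X → X}
    (hf : ∀ x y, x ≠ y → dist (f x) (f y) < dist x y) : LipschitzWith 1 f := by
  refine LipschitzWith.of_dist_le_mul fun x y => ?_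
  rcases eq_or_ne x y with rfl | hxy
  · simp
  · simpa using (hf x y hxy).le

lemma IsCompact.hausdorffDist_pos {A B : Set X} (hA : IsCompact A) (hB : IsCompact B)
    (hAne : A.Nonempty) (hBne : B.Nonempty) (hAB : A ≠ B) : 0 < hausdorffDist A B := by
  refine hausdorffDist_nonneg.lt_of_ne fun h => hAB ?_
  have hfin := hausdorffEDist_ne_top_of_nonempty_of_bounded hAne hBne hA.isBounded hB.isBounded
  simpa [hA.isClosed.closure_eq, hB.isClosed.closure_eq] using
    (hausdorffDist_zero_iff_closure_eq_closure hfin).1 h.symm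

lemma infDist_image_lt {f : X → X} (hf : ∀ x y, x ≠ y → dist (f x) (f y) < dist x y)
    {T : Set X} (hT : IsCompact T) (hTne : T.Nonempty) {a : X} {r : ℝ} (hr : 0 < r)
    (ha : infDist a T ≤ r) : infDist (f a) (f '' T) < r := by
  obtain ⟨b, hbT, hab⟩ := hT.exists_infDist_eq_dist hTne a
  calc infDist (f a) (f '' T) ≤ dist (f a) (f b) := infDist_le_dist_of_mem ⟨b, hbT, rfl⟩
    _ < r := by
      rcases eq_or_ne a b with rfl | hne
      · simpa using hr
      · exact (hf a b hne).trans_le (hab ▸ ha)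

lemma infDist_iUnion_image_lt {ι : Type*} {f : ι → X → X}
    (hf : ∀ i x y, x ≠ y → dist (f i x) (f i y) < dist x y)
    {S T : Set X} (hT : IsCompact T) (hTne : T.Nonempty) {r : ℝ} (hr : 0 < r)
    (hST : ∀ a ∈ S, infDist a T ≤ r) :
    ∀ x ∈ ⋃ i, f i '' S, infDist x (⋃ i, f i '' T) < r := by
  simp only [Set.mem_iUnion, Set.mem_image]
  rintro _ ⟨i, a, haS, rfl⟩
  calc infDist (f i a) (⋃ i, f i '' T) ≤ infDist (f i a) (f i '' T) :=
        infDist_le_infDist_of_subset (Set.subset_iUnion (fun i => f i '' T) i) (hTne.image _)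
    _ < r := infDist_image_lt (hf i) hT hTne hr (hST a haS)

lemma IsCompact.exists_forall_infDist_le_of_lt {S T : Set X} (hS : IsCompact S) {r : ℝ}
    (hr : 0 < r) (h : ∀ x ∈ S, infDist x T < r) :
    ∃ ρ, 0 ≤ ρ ∧ ρ < r ∧ ∀ x ∈ S, infDist x T ≤ ρ := by
  rcases S.eq_empty_or_nonempty with rfl | hSne
  · exact ⟨0, le_rfl, hr, by simp⟩
  obtain ⟨x₀, hx₀, hmax⟩ := hS.exists_isMaxOn hSne (continuous_infDist_pt T).continuousOn
  exact ⟨infDist x₀ T, infDist_nonneg, h x₀ hx₀, fun x hx => hmax hx⟩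

lemma hausdorffDist_lt_of_forall_infDist_lt {S T : Set X} (hS : IsCompact S)
    (hT : IsCompact T) {r : ℝ} (hr : 0 < r) (hST : ∀ x ∈ S, infDist x T < r)
    (hTS : ∀ y ∈ T, infDist y S < r) : hausdorffDist S T < r := by
  obtain ⟨ρ, hρ0, hρr, hρ⟩ := hS.exists_forall_infDist_le_of_lt hr hST
  obtain ⟨σ, -, hσr, hσ⟩ := hT.exists_forall_infDist_le_of_lt hr hTS
  calc hausdorffDist S T ≤ max ρ σ :=
        hausdorffDist_le_of_infDist (le_max_of_le_left hρ0)
          (fun x hx => le_max_of_le_left (hρ x hx)) (fun y hy => le_max_of_le_right (hσ y hy))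
    _ < r := max_lt hρr hσr

end

theorem stmt_14_general {X : Type*} [MetricSpace X] {m : ℕ}
    (f : Fin m → X → X)
    (hdec : ∀ (i : Fin m) (x y : X), x ≠ y → dist (f i x) (f i y) < dist x y) :
    ∀ A B : Set X, A.Nonempty → IsCompact A → B.Nonempty → IsCompact B → A ≠ B →
      hausdorffDist (⋃ i : Fin m, f i '' A) (⋃ i : Fin m, f i '' B) <
        hausdorffDist A B := by
  intro A B hAne hA hBne hB hAB
  have hcont : ∀ i, Continuous (f i) := fun i =>
    (lipschitzWith_one_of_dist_lt (hdec i)).continuous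
  have hr := hA.hausdorffDist_pos hB hAne hBne hAB
  have hfin := hausdorffEDist_ne_top_of_nonempty_of_bounded hAne hBne hA.isBounded hB.isBounded
  refine hausdorffDist_lt_of_forall_infDist_lt
    (isCompact_iUnion fun i => hA.image (hcont i)) (isCompact_iUnion fun i => hB.image (hcont i))
    hr ?_ ?_
  · exact infDist_iUnion_image_lt hdec hB hBne hr fun a ha =>
      infDist_le_hausdorffDist_of_mem ha hfin
  · refine infDist_iUnion_image_lt hdec hA hAne hr fun b hb => ?_
    rw [hausdorffDist_comm]
    exact infDist_le_hausdorffDist_of_mem hb (hausdorffEDist_comm.trans_ne hfin)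

theorem stmt_14 {X : Type*} [MetricSpace X] [CompactSpace X] {m : ℕ} (hm : 0 < m)
    (f : Fin m → X → X)
    (hdec : ∀ (i : Fin m) (x y : X), x ≠ y → dist (f i x) (f i y) < dist x y) :
    ∀ A B : Set X, A.Nonempty → IsCompact A → B.Nonempty → IsCompact B → A ≠ B →
      hausdorffDist (⋃ i : Fin m, f i '' A) (⋃ i : Fin m, f i '' B) <
        hausdorffDist A B :=
  stmt_14_general f hdec
end

section
/- Let X be a metric space, G ⊆ X a non-empty compact set, and A a non-empty compact subset of X. Then the Hausdorff distance from A to the collection K(G) of non-empty compact subsets of G satisfies inf_{B ∈ K(G)} d_H(A,B) = sup_{x∈A} d(x,G), and the infimum is attained. -/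
open Metric

theorem stmt_17 {X : Type*} [MetricSpace X] (G A : Set X)
    (hGne : G.Nonempty) (hGc : IsCompact G) (hAne : A.Nonempty) (hAc : IsCompact A) :
    ∃ B : Set X, B.Nonempty ∧ IsCompact B ∧ B ⊆ G ∧
      hausdorffDist A B = (⨆ x : A, infDist (x : X) G) ∧
      ∀ B' : Set X, B'.Nonempty → IsCompact B' → B' ⊆ G →
        (⨆ x : A, infDist (x : X) G) ≤ hausdorffDist A B' := by
  set s : ℝ := ⨆ x : A, infDist (x : X) G with hs
  have hrange : Set.range (fun x : A => infDist (x : X) G) = (fun x => infDist x G) '' A := by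
    ext y; simp
  have hbdd : BddAbove (Set.range fun x : A => infDist (x : X) G) := by
    rw [hrange]
    exact ((hAc.image (continuous_infDist_pt G)).isBounded).bddAbove
  have hle : ∀ x ∈ A, infDist x G ≤ s := fun x hx => le_ciSup hbdd (⟨x, hx⟩ : A)
  obtain ⟨a, ha⟩ := id hAne
  have hs0 : 0 ≤ s := le_trans infDist_nonneg (hle a ha)
  set B : Set X := {y | y ∈ G ∧ infDist y A ≤ s} with hB
  have hBG : B ⊆ G := fun y hy => hy.1
  -- B is compact: closed subset of G
  have hBclosed : IsClosed B := by
    have : B = G ∩ (fun y => infDist y A) ⁻¹' Set.Iic s := rfl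
    rw [this]
    exact hGc.isClosed.inter (isClosed_Iic.preimage (continuous_infDist_pt A))
  have hBc : IsCompact B := hGc.of_isClosed_subset hBclosed hBG
  -- nonempty
  obtain ⟨y0, hy0G, hy0⟩ := hGc.exists_infDist_eq_dist hGne a
  have hy0B : y0 ∈ B := by
    refine ⟨hy0G, ?_⟩
    have : infDist y0 A ≤ dist y0 a := infDist_le_dist_of_mem ha
    rw [dist_comm] at this
    exact le_trans (this.trans_eq hy0.symm) (hle a ha)
  have hBne : B.Nonempty := ⟨y0, hy0B⟩
  -- hausdorffDist A B ≤ s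
  have h1 : ∀ x ∈ A, infDist x B ≤ s := by
    intro x hx
    obtain ⟨y, hyG, hy⟩ := hGc.exists_infDist_eq_dist hGne x
    have hyB : y ∈ B := by
      refine ⟨hyG, ?_⟩
      have : infDist y A ≤ dist y x := infDist_le_dist_of_mem hx
      rw [dist_comm] at this
      exact le_trans (this.trans_eq hy.symm) (hle x hx)
    calc infDist x B ≤ dist x y := infDist_le_dist_of_mem hyB
    _ = infDist x G := hy.symm
    _ ≤ s := hle x hx
  have h2 : ∀ y ∈ B, infDist y A ≤ s := fun y hy => hy.2
  have hupper : hausdorffDist A B ≤ s := hausdorffDist_le_of_infDist hs0 h1 h2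
  have hEdist : ∀ B' : Set X, B'.Nonempty → IsCompact B' → EMetric.hausdorffEdist A B' ≠ ⊤ :=
    fun B' hB'ne hB'c =>
      hausdorffEdist_ne_top_of_nonempty_of_bounded hAne hB'ne hAc.isBounded hB'c.isBounded
  have hlower : ∀ B' : Set X, B'.Nonempty → IsCompact B' → B' ⊆ G →
      s ≤ hausdorffDist A B' := by
    intro B' hB'ne hB'c hB'G
    rw [hs]
    haveI : Nonempty A := hAne.to_subtype
    apply ciSup_le
    intro x
    calc infDist (x : X) G ≤ infDist (x : X) B' := infDist_le_infDist_of_subset hB'G hB'ne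
    _ ≤ hausdorffDist A B' := infDist_le_hausdorffDist_of_mem x.2 (hEdist B' hB'ne hB'c)
  refine ⟨B, hBne, hBc, hBG, le_antisymm hupper (hlower B hBne hBc hBG), hlower⟩
end
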